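/- arXiv:1302.4870 — 3 statements merged into one kernel-verified Lean document; each statement's English description precedes it below -/
import Mathlib

section
/- For each i ≥ 0, the recursive quadrangle 1-planar graph G_i admits a bar 1-visibility drawing; i.e., every recursive quadrangle 1-planar graph is bar 1-visible. -/
/-- A bar 1-visibility drawing of a graph: each vertex `v` is a horizontal bar
at height `y v` spanning `[left v, right v]`; each edge `{u,v}` is a vertical
segment at abscissa `ex u v` joining the bars of `u` and `v`; the vertical
segment of an edge intersects at most one bar other than those of its
endpoints. -/
structure BarDrawing {V : Type*} (G : SimpleGraph V) where
  y : V → ℝ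
  left : V → ℝ
  right : V → ℝ
  y_inj : Function.Injective y
  left_le_right : ∀ v, left v ≤ right v
  ex : V → V → ℝ
  ex_symm : ∀ u v, ex u v = ex v u
  ex_mem : ∀ u v, G.Adj u v →
    ex u v ∈ Set.Icc (left u) (right u) ∩ Set.Icc (left v) (right v)

/-- The bar of `w` is crossed by the vertical segment of the edge `{u,v}`. -/
def BarDrawing.CrossesBar {V : Type*} {G : SimpleGraph V} (d : BarDrawing G)
    (u v w : V) : Prop :=
  w ≠ u ∧ w ≠ v ∧ d.ex u v ∈ Set.Icc (d.left w) (d.right w) ∧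
    d.y w ∈ Set.Ioo (min (d.y u) (d.y v)) (max (d.y u) (d.y v))

/-- A graph is bar 1-visible if it admits a bar 1-visibility drawing: each
edge's vertical segment crosses at most one non-endpoint bar. -/
def IsBar1Visible {V : Type*} (G : SimpleGraph V) : Prop :=
  ∃ d : BarDrawing G, ∀ u v, G.Adj u v →
    {w : V | d.CrossesBar u v w}.Subsingleton

/-- The recursive quadrangle 1-planar graph `G_i`: its vertices form `i + 2`
nested rectangles of four vertices each (`(k, 0), (k, 1), (k, 2), (k, 3)` is
the `k`-th rectangle, the outermost being `k = i + 1`); each rectangle is a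
4-cycle, and each rectangle is joined to the next one by 16 edges (all pairs).
`G_{i+1}` is obtained from `G_i` by adding a new outer rectangle and these
16 connecting edges. -/
def recQuad (i : ℕ) : SimpleGraph (Fin (i + 2) × Fin 4) where
  Adj u v := u ≠ v ∧
    ((u.1.val = v.1.val ∧
        ((u.2.val + 1) % 4 = v.2.val ∨ (v.2.val + 1) % 4 = u.2.val)) ∨
      u.1.val + 1 = v.1.val ∨ v.1.val + 1 = u.1.val)
  symm := by
    constructor
    intro u v h
    obtain ⟨h1, h2⟩ := h
    exact ⟨h1.symm, by omega⟩
  loopless := by constructor; intro u h; exact h.1 rfl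

/-! `G_i` is a subgraph of the infinite graph of nested quadrangles on `ℕ × Fin 4`, so it is
enough to draw the latter. Layer `k` is drawn as layer `0` pushed away from the axes: a nonzero
coordinate `x` becomes `x + d * sign x`, with `d = 2k` for heights and `d = 10k` for abscissae.
This map is strictly monotone, so layers `k` and `k + 1` with the edges inside and between them
look exactly like layers `0` and `1`, where one checks by evaluation that no edge crosses two
bars. No other bar is crossed: an edge whose lower layer is `k` runs in a column at distance at
least `10k + 1` from the vertical axis, beyond every bar of an inner layer, and its endpoints are
no farther from the horizontal axis than layer `k + 1`, nearer than every bar of an outer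
layer. -/

namespace BarDrawing

variable {V W : Type*} {G : SimpleGraph V} {H : SimpleGraph W}

def comap (d : BarDrawing H) (f : G →g H) (hf : Function.Injective f) : BarDrawing G where
  y := d.y ∘ f
  left := d.left ∘ f
  right := d.right ∘ f
  y_inj := d.y_inj.comp hf
  left_le_right v := d.left_le_right (f v)
  ex u v := d.ex (f u) (f v)
  ex_symm u v := d.ex_symm (f u) (f v)
  ex_mem u v h := d.ex_mem (f u) (f v) (f.map_rel h)

theorem crossesBar_comap (d : BarDrawing H) (f : G →g H) (hf : Function.Injective f)
    (u v w : V) : (d.comap f hf).CrossesBar u v w ↔ d.CrossesBar (f u) (f v) (f w) := by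
  simp only [CrossesBar, comap, Function.comp_apply, hf.ne_iff]

end BarDrawing

theorem IsBar1Visible.comap {V W : Type*} {G : SimpleGraph V} {H : SimpleGraph W}
    (hH : IsBar1Visible H) (f : G →g H) (hf : Function.Injective f) : IsBar1Visible G := by
  obtain ⟨d, hd⟩ := hH
  refine ⟨d.comap f hf, fun u v huv => ?_⟩
  simp only [BarDrawing.crossesBar_comap]
  exact (hd _ _ (f.map_rel huv)).preimage hf

def NestedQuadrangles.Precedes (u v : ℕ × Fin 4) : Prop :=
  (u.1 = v.1 ∧ u.2 + 1 = v.2) ∨ u.1 + 1 = v.1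

def nestedQuadrangles : SimpleGraph (ℕ × Fin 4) :=
  SimpleGraph.fromRel NestedQuadrangles.Precedes

def recQuadToNestedQuadrangles (i : ℕ) : recQuad i →g nestedQuadrangles where
  toFun v := (v.1.val, v.2)
  map_rel' := by
    rintro ⟨k, a⟩ ⟨l, b⟩ ⟨hne, hadj⟩
    simp only [nestedQuadrangles, NestedQuadrangles.Precedes, SimpleGraph.fromRel_adj, ne_eq,
      Prod.mk.injEq, Fin.ext_iff, Fin.val_add] at hne hadj ⊢
    omega

theorem recQuadToNestedQuadrangles_injective (i : ℕ) :
    Function.Injective (recQuadToNestedQuadrangles i) := by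
  rintro ⟨k, a⟩ ⟨l, b⟩ h
  simp_all [recQuadToNestedQuadrangles, Fin.ext_iff]

namespace NestedQuadrangles

def pushOut (d : ℕ) (x : ℤ) : ℤ := x + d * x.sign

theorem pushOut_of_neg (d : ℕ) {x : ℤ} (hx : x < 0) : pushOut d x = x - d := by
  simp [pushOut, Int.sign_eq_neg_one_of_neg hx, sub_eq_add_neg]

theorem pushOut_of_pos (d : ℕ) {x : ℤ} (hx : 0 < x) : pushOut d x = x + d := by
  simp [pushOut, Int.sign_eq_one_of_pos hx]

theorem pushOut_zero (d : ℕ) : pushOut d 0 = 0 := by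
  simp [pushOut]

theorem pushOut_strictMono (d : ℕ) : StrictMono (pushOut d) := by
  intro x y hxy
  rcases lt_trichotomy x 0 with hx | rfl | hx <;> rcases lt_trichotomy y 0 with hy | rfl | hy <;>
    simp only [pushOut_of_neg d, pushOut_of_pos d, pushOut_zero, *] <;> omega

theorem pushOut_add (d e : ℕ) (x : ℤ) : pushOut (d + e) x = pushOut d (pushOut e x) := by
  rcases lt_trichotomy x 0 with hx | rfl | hx
  · rw [pushOut_of_neg _ hx, pushOut_of_neg _ hx, pushOut_of_neg _ (by omega)]
    push_cast; ring
  · simp only [pushOut_zero]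
  · rw [pushOut_of_pos _ hx, pushOut_of_pos _ hx, pushOut_of_pos _ (by omega)]
    push_cast; ring

theorem abs_pushOut_le (d : ℕ) {x c : ℤ} (h : |x| ≤ c) : |pushOut d x| ≤ c + d := by
  rcases lt_trichotomy x 0 with hx | rfl | hx
  · rw [pushOut_of_neg _ hx, abs_of_neg (by omega)]
    rw [abs_of_neg hx] at h
    omega
  · rw [pushOut_zero, abs_zero]
    have := (abs_nonneg (0 : ℤ)).trans h
    omega
  · rw [pushOut_of_pos _ hx, abs_of_pos (by omega)]
    rw [abs_of_pos hx] at h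
    omega

theorem abs_pushOut (d : ℕ) {x : ℤ} (hx : x ≠ 0) : |pushOut d x| = |x| + d := by
  rcases hx.lt_or_gt with hx | hx
  · rw [pushOut_of_neg _ hx, abs_of_neg hx, abs_of_neg (by omega)]
    ring
  · rw [pushOut_of_pos _ hx, abs_of_pos hx, abs_of_pos (by omega)]

def baseHeight : Fin 4 → ℤ := ![-2, -1, 2, 1]

def baseLeft : Fin 4 → ℤ := ![-1, -2, -4, -3]

def baseRight : Fin 4 → ℤ := ![4, 3, 1, 2]

def baseCrossColumn (a b : Fin 4) : ℤ :=
  if a = 2 ∨ b < 2 then baseLeft a else if b = 2 then baseRight a else baseRight a - 1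

def height (v : ℕ × Fin 4) : ℤ := pushOut (2 * v.1) (baseHeight v.2)

def leftEnd (v : ℕ × Fin 4) : ℤ := pushOut (10 * v.1) (baseLeft v.2)

def rightEnd (v : ℕ × Fin 4) : ℤ := pushOut (10 * v.1) (baseRight v.2)

def column (u v : ℕ × Fin 4) : ℤ :=
  if u.1 < v.1 then pushOut (10 * u.1) (baseCrossColumn u.2 v.2)
  else if v.1 < u.1 then pushOut (10 * v.1) (baseCrossColumn v.2 u.2)
  else pushOut (10 * u.1) (-(min u.2.val v.2.val + 1))

def OnBar (x : ℤ) (w : ℕ × Fin 4) : Prop := leftEnd w ≤ x ∧ x ≤ rightEnd w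

-- `CrossesBar` without `w ≠ u` and `w ≠ v`, which follow from the strict height bounds.
def Crosses (u v w : ℕ × Fin 4) : Prop :=
  OnBar (column u v) w ∧ min (height u) (height v) < height w ∧ height w < max (height u) (height v)

def shift (k : ℕ) (v : ℕ × Fin 4) : ℕ × Fin 4 := (k + v.1, v.2)

theorem height_shift (k : ℕ) (v : ℕ × Fin 4) :
    height (shift k v) = pushOut (2 * k) (height v) := by
  rw [height, height, shift, mul_add, pushOut_add]

theorem onBar_shift (k : ℕ) (x : ℤ) (w : ℕ × Fin 4) :
    OnBar (pushOut (10 * k) x) (shift k w) ↔ OnBar x w := by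
  simp only [OnBar, leftEnd, rightEnd, shift, mul_add, pushOut_add,
    (pushOut_strictMono _).le_iff_le]

theorem column_shift (k : ℕ) (u v : ℕ × Fin 4) :
    column (shift k u) (shift k v) = pushOut (10 * k) (column u v) := by
  simp only [column, shift, add_lt_add_iff_left, mul_add, pushOut_add, apply_ite (pushOut _)]

theorem crosses_shift (k : ℕ) (u v w : ℕ × Fin 4) :
    Crosses (shift k u) (shift k v) (shift k w) ↔ Crosses u v w := by
  simp only [Crosses, column_shift, onBar_shift, height_shift,
    ← (pushOut_strictMono _).monotone.map_min, ← (pushOut_strictMono _).monotone.map_max,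
    (pushOut_strictMono _).lt_iff_lt]

theorem Precedes.exists_shift {u v : ℕ × Fin 4} (h : Precedes u v) :
    ∃ k a l b, l < 2 ∧ Precedes (0, a) (l, b) ∧ u = shift k (0, a) ∧ v = shift k (l, b) := by
  obtain ⟨k, a⟩ := u
  obtain ⟨m, b⟩ := v
  rcases h with ⟨rfl, rfl⟩ | rfl
  · exact ⟨k, a, 0, a + 1, by norm_num, .inl ⟨rfl, rfl⟩, rfl, rfl⟩
  · exact ⟨k, a, 1, b, by norm_num, .inr rfl, rfl, rfl⟩

theorem baseHeight_injective : Function.Injective baseHeight := by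
  decide

theorem abs_baseHeight (j : Fin 4) : baseHeight j ≠ 0 ∧ |baseHeight j| ≤ 2 := by
  revert j
  decide

theorem abs_baseLeft_le (j : Fin 4) : |baseLeft j| ≤ 4 := by
  revert j
  decide

theorem abs_baseRight_le (j : Fin 4) : |baseRight j| ≤ 4 := by
  revert j
  decide

theorem baseLeft_le_baseRight (j : Fin 4) : baseLeft j ≤ baseRight j := by
  revert j
  decide

theorem base_column_ne_zero : ∀ (a b : Fin 4), ∀ l < 2, column (0, a) (l, b) ≠ 0 := by
  decide

theorem base_onBar_column : ∀ (a b : Fin 4), ∀ l < 2, Precedes (0, a) (l, b) →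
    OnBar (column (0, a) (l, b)) (0, a) ∧ OnBar (column (0, a) (l, b)) (l, b) := by
  unfold Precedes OnBar
  decide

set_option synthInstance.maxSize 1000 in
theorem base_crosses_unique : ∀ (a b c₁ c₂ : Fin 4), ∀ l < 2, ∀ m₁ < 2, ∀ m₂ < 2,
    Precedes (0, a) (l, b) → Crosses (0, a) (l, b) (m₁, c₁) → Crosses (0, a) (l, b) (m₂, c₂) →
      (m₁, c₁) = (m₂, c₂) := by
  unfold Precedes Crosses OnBar
  decide

theorem abs_height (v : ℕ × Fin 4) : 2 * v.1 + 1 ≤ |height v| ∧ |height v| ≤ 2 * v.1 + 2 := by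
  obtain ⟨hne, hle⟩ := abs_baseHeight v.2
  have := Int.one_le_abs hne
  rw [height, abs_pushOut _ hne]
  push_cast
  omega

theorem height_injective : Function.Injective height := by
  rintro ⟨k, a⟩ ⟨l, b⟩ h
  obtain rfl : k = l := by
    have hk := abs_height (k, a)
    have hl := abs_height (l, b)
    rw [h] at hk
    omega
  exact Prod.ext rfl (baseHeight_injective ((pushOut_strictMono _).injective h))

theorem leftEnd_le_rightEnd (v : ℕ × Fin 4) : leftEnd v ≤ rightEnd v :=
  (pushOut_strictMono _).monotone (baseLeft_le_baseRight v.2)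

theorem abs_le_of_onBar {x : ℤ} {w : ℕ × Fin 4} (h : OnBar x w) : |x| ≤ 10 * w.1 + 4 := by
  have hl := abs_le.mp (abs_pushOut_le (10 * w.1) (abs_baseLeft_le w.2))
  have hr := abs_le.mp (abs_pushOut_le (10 * w.1) (abs_baseRight_le w.2))
  obtain ⟨hxl, hxr⟩ := h
  rw [leftEnd] at hxl
  rw [rightEnd] at hxr
  push_cast at hl hr
  exact abs_le.mpr ⟨by linarith, by linarith⟩

theorem column_comm (u v : ℕ × Fin 4) : column u v = column v u := by
  unfold column
  split_ifs with h₁ h₂ h₃ <;> try omega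
  rw [show u.1 = v.1 by omega, min_comm]

theorem onBar_column {u v : ℕ × Fin 4} (h : Precedes u v) :
    OnBar (column u v) u ∧ OnBar (column u v) v := by
  obtain ⟨k, a, l, b, hl, hab, rfl, rfl⟩ := h.exists_shift
  simpa only [column_shift, onBar_shift] using base_onBar_column a b l hl hab

theorem exists_shift_of_crosses {k l : ℕ} {a b : Fin 4} {w : ℕ × Fin 4} (hl : l < 2)
    (h : Crosses (shift k (0, a)) (shift k (l, b)) w) : ∃ m c, m < 2 ∧ w = shift k (m, c) := by
  obtain ⟨hx, hy⟩ := h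
  have hcol : 10 * (k : ℤ) + 1 ≤ |column (shift k (0, a)) (shift k (l, b))| := by
    rw [column_shift, abs_pushOut _ (base_column_ne_zero a b l hl)]
    have := Int.one_le_abs (base_column_ne_zero a b l hl)
    push_cast
    omega
  have hbar := abs_le_of_onBar hx
  have hu := abs_le.mp (abs_height (shift k (0, a))).2
  have hv := abs_le.mp (abs_height (shift k (l, b))).2
  have hw := le_abs'.mp (abs_height w).1
  simp only [shift] at hu hv hy
  exact ⟨w.1 - k, w.2, by omega, Prod.ext (by simp only [shift]; omega) rfl⟩

theorem crosses_subsingleton {u v : ℕ × Fin 4} (h : Precedes u v) :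
    {w | Crosses u v w}.Subsingleton := by
  obtain ⟨k, a, l, b, hl, hab, rfl, rfl⟩ := h.exists_shift
  rintro w₁ h₁ w₂ h₂
  obtain ⟨m₁, c₁, hm₁, rfl⟩ := exists_shift_of_crosses hl h₁
  obtain ⟨m₂, c₂, hm₂, rfl⟩ := exists_shift_of_crosses hl h₂
  exact congrArg (shift k) (base_crosses_unique a b c₁ c₂ l hl m₁ hm₁ m₂ hm₂ hab
    ((crosses_shift k _ _ _).1 h₁) ((crosses_shift k _ _ _).1 h₂))

theorem crosses_comm (u v w : ℕ × Fin 4) : Crosses u v w ↔ Crosses v u w := by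
  rw [Crosses, Crosses, column_comm, min_comm, max_comm]

def drawing : BarDrawing nestedQuadrangles where
  y v := height v
  left v := leftEnd v
  right v := rightEnd v
  y_inj := Int.cast_injective.comp height_injective
  left_le_right v := Int.cast_le.mpr (leftEnd_le_rightEnd v)
  ex u v := column u v
  ex_symm u v := by rw [column_comm]
  ex_mem u v h := by
    rw [nestedQuadrangles, SimpleGraph.fromRel_adj] at h
    obtain ⟨⟨hul, hur⟩, ⟨hvl, hvr⟩⟩ :=
      h.2.elim onBar_column fun h => column_comm v u ▸ (onBar_column h).symm
    exact ⟨⟨by exact_mod_cast hul, by exact_mod_cast hur⟩,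
      ⟨by exact_mod_cast hvl, by exact_mod_cast hvr⟩⟩

theorem crosses_of_crossesBar {u v w : ℕ × Fin 4} (h : drawing.CrossesBar u v w) :
    Crosses u v w := by
  obtain ⟨-, -, ⟨hl, hr⟩, hlo, hhi⟩ := h
  dsimp only [drawing] at hl hr hlo hhi
  exact ⟨⟨by exact_mod_cast hl, by exact_mod_cast hr⟩, by exact_mod_cast hlo,
    by exact_mod_cast hhi⟩

end NestedQuadrangles

open NestedQuadrangles in
theorem nestedQuadrangles_isBar1Visible : IsBar1Visible nestedQuadrangles := by
  refine ⟨drawing, fun u v huv => ?_⟩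
  have hsub : {w | Crosses u v w}.Subsingleton := by
    rw [nestedQuadrangles, SimpleGraph.fromRel_adj] at huv
    rcases huv.2 with h | h
    · exact crosses_subsingleton h
    · simpa only [crosses_comm] using crosses_subsingleton h
  exact hsub.anti fun w => crosses_of_crossesBar

/-- Every recursive quadrangle 1-planar graph `G_i` admits a bar
1-visibility drawing, i.e. it is bar 1-visible. -/
theorem recQuad_isBar1Visible (i : ℕ) : IsBar1Visible (recQuad i) :=
  nestedQuadrangles_isBar1Visible.comap _ (recQuadToNestedQuadrangles_injective i)
end

section
/- Every even pseudo double wheel 1-planar graph is a bar 1-visible graph. -/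
/-- The even pseudo double wheel 1-planar graph on `2n + 2` vertices: a cycle
`c_0 c_1 … c_{2n-1}` (with `v_i` the even- and `u_i` the odd-indexed
vertices), a hub `x = Sum.inr false` outside and a hub `y = Sum.inr true`
inside, where in the plane graph `H` (cycle plus `x` joined to the `u_i` and
`y` joined to the `v_i`) a pair of crossing edges is added inside every face.
This results in: both hubs joined to all cycle vertices, all cycle edges
`c_k c_{k+1}`, and all "skip" edges `c_k c_{k+2}`. -/
def evenPDW (n : ℕ) : SimpleGraph (Fin (2 * n) ⊕ Bool) where
  Adj u v :=
    match u, v with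
    | Sum.inl a, Sum.inl b =>
        a.val ≠ b.val ∧
        ((a.val + 1) % (2 * n) = b.val ∨ (b.val + 1) % (2 * n) = a.val ∨
          (a.val + 2) % (2 * n) = b.val ∨ (b.val + 2) % (2 * n) = a.val)
    | Sum.inl _, Sum.inr _ => True
    | Sum.inr _, Sum.inl _ => True
    | Sum.inr a, Sum.inr b => a ≠ b
  symm := by
    refine ⟨?_⟩
    intro u v h
    cases u <;> cases v <;> simp_all [ne_comm] <;> omega
  loopless := by
    refine ⟨?_⟩
    intro u h
    cases u <;> simp_all

/-!
Put the cycle vertex `c_k` at height `k`, the hub `x` below the cycle and the hub `y` above it,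
and give `c_k` the bar `[k - 2n, k]`, except that the bar of `c_0` is stretched right to `2n - 2`
and that of `c_{2n-1}` left to `-2n`. The edges `c_k c_{k+1}` and `c_k c_{k+2}` are drawn at
abscissa `0` and cross at most `c_{k+1}`; `c_a x` is drawn at `a` and `c_a y` at `a - 2n`, so
they cross at most the stretched bars of `c_0` and `c_{2n-1}`; the wrap-around chords
`c_i c_{2n-1}` with `i ≤ 1` (at `i - 2n`) and `c_0 c_{2n-2}` (at `2n - 2`) pass beside all
intermediate bars, and `x y` passes right of every cycle bar. As bars lie at distinct heights, an
edge all of whose crossed bars lie at one height crosses at most one bar.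
-/

open Function

lemma Nat.mod_eq_ite_of_lt_two_mul {m N : ℕ} (h : m < 2 * N) :
    m % N = if m < N then m else m - N := by
  split_ifs with hm
  · exact Nat.mod_eq_of_lt hm
  · rw [Nat.mod_eq_sub_mod (by omega), Nat.mod_eq_of_lt (by omega)]

namespace BarDrawing

variable {V : Type*} {G : SimpleGraph V}

theorem crossesBar_comm (d : BarDrawing G) {u v w : V} :
    d.CrossesBar u v w ↔ d.CrossesBar v u w := by
  simp only [CrossesBar, d.ex_symm u v, min_comm, max_comm]
  tauto

theorem isBar1Visible (d : BarDrawing G)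
    (h : ∀ u v, G.Adj u v → ∃ t, ∀ w, d.CrossesBar u v w → d.y w = t) :
    IsBar1Visible G := by
  refine ⟨d, fun u v huv => ?_⟩
  obtain ⟨t, ht⟩ := h u v huv
  exact (Set.subsingleton_singleton.preimage d.y_inj).anti ht

section ofInt

variable (y left right : V → ℤ) (ex : V → V → ℤ) (y_inj : Injective y)
  (left_le_right : ∀ v, left v ≤ right v) (ex_symm : ∀ u v, ex u v = ex v u)
  (ex_mem : ∀ u v, G.Adj u v →
    ex u v ∈ Set.Icc (left u) (right u) ∩ Set.Icc (left v) (right v))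

def ofInt : BarDrawing G where
  y v := y v
  left v := left v
  right v := right v
  y_inj := Int.cast_injective.comp y_inj
  left_le_right v := Int.cast_le.2 (left_le_right v)
  ex u v := ex u v
  ex_symm u v := congrArg _ (ex_symm u v)
  ex_mem u v huv := by
    obtain ⟨⟨h₁, h₂⟩, h₃, h₄⟩ := ex_mem u v huv
    exact ⟨⟨Int.cast_le.2 h₁, Int.cast_le.2 h₂⟩, Int.cast_le.2 h₃, Int.cast_le.2 h₄⟩

theorem ofInt_crossesBar_iff {u v w : V} :
    (ofInt y left right ex y_inj left_le_right ex_symm ex_mem : BarDrawing G).CrossesBar u v w ↔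
      w ≠ u ∧ w ≠ v ∧ ex u v ∈ Set.Icc (left w) (right w) ∧
        y w ∈ Set.Ioo (min (y u) (y v)) (max (y u) (y v)) := by
  simp only [CrossesBar, ofInt, Set.mem_Icc, Set.mem_Ioo]
  norm_cast

end ofInt

end BarDrawing

namespace EvenPDW

open BarDrawing

variable (n : ℕ)

def height : Fin (2 * n) ⊕ Bool → ℤ
  | .inl k => k
  | .inr false => -1
  | .inr true => 2 * n

def barLeft : Fin (2 * n) ⊕ Bool → ℤ
  | .inl k => if k.val + 1 = 2 * n then -(2 * n) else k - 2 * n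
  | .inr false => 0
  | .inr true => -(2 * n)

def barRight : Fin (2 * n) ⊕ Bool → ℤ
  | .inl k => if k.val = 0 then 2 * n - 2 else k
  | .inr _ => 2 * n

def cycleEdgeX (i j : ℕ) : ℤ :=
  if j + 1 = 2 * n ∧ i ≤ 1 then i - 2 * n
  else if i = 0 ∧ j + 2 = 2 * n then j
  else 0

def edgeX : Fin (2 * n) ⊕ Bool → Fin (2 * n) ⊕ Bool → ℤ
  | .inl a, .inl b => cycleEdgeX n (min a.val b.val) (max a.val b.val)
  | .inl a, .inr false | .inr false, .inl a => a
  | .inl a, .inr true | .inr true, .inl a => a - 2 * n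
  | .inr _, .inr _ => 2 * n

theorem adj_inl_inl_cases {a b : Fin (2 * n)} (h : (evenPDW n).Adj (.inl a) (.inl b)) :
    a.val ≠ b.val ∧ (max a.val b.val = min a.val b.val + 1 ∨ max a.val b.val = min a.val b.val + 2 ∨
      (max a.val b.val + 1 = 2 * n ∧ min a.val b.val ≤ 1) ∨
      (min a.val b.val = 0 ∧ max a.val b.val + 2 = 2 * n)) := by
  obtain ⟨hab, h⟩ := h
  have ha := a.isLt
  have hb := b.isLt
  refine ⟨hab, ?_⟩
  rcases h with h | h | h | h <;> rw [Nat.mod_eq_ite_of_lt_two_mul (by omega)] at h <;>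
    split_ifs at h <;> omega

theorem height_injective : Injective (height n) := by
  rintro (a | _ | _) (b | _ | _) h <;>
    simp only [height, Sum.inl.injEq, reduceCtorEq, Fin.ext_iff] at h ⊢ <;> omega

theorem barLeft_le_barRight (v : Fin (2 * n) ⊕ Bool) : barLeft n v ≤ barRight n v := by
  rcases v with k | _ | _ <;> simp only [barLeft, barRight] <;> (try split_ifs) <;> omega

theorem edgeX_comm (u v : Fin (2 * n) ⊕ Bool) : edgeX n u v = edgeX n v u := by
  rcases u with a | _ | _ <;> rcases v with b | _ | _ <;> simp only [edgeX, min_comm, max_comm]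

theorem edgeX_mem (u v : Fin (2 * n) ⊕ Bool) (huv : (evenPDW n).Adj u v) :
    edgeX n u v ∈ Set.Icc (barLeft n u) (barRight n u) ∩ Set.Icc (barLeft n v) (barRight n v) := by
  simp only [Set.mem_inter_iff, Set.mem_Icc]
  rcases u with a | _ | _ <;> rcases v with b | _ | _
  case inl.inl =>
    have hab := adj_inl_inl_cases n huv
    simp only [edgeX, cycleEdgeX, barLeft, barRight]
    split_ifs <;> omega
  all_goals simp only [edgeX, barLeft, barRight]; (try split_ifs) <;> omega

def drawing : BarDrawing (evenPDW n) :=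
  ofInt (height n) (barLeft n) (barRight n) (edgeX n) (height_injective n)
    (barLeft_le_barRight n) (edgeX_comm n) (edgeX_mem n)

variable {n}

theorem crossesBar_iff {u v w : Fin (2 * n) ⊕ Bool} :
    (drawing n).CrossesBar u v w ↔ w ≠ u ∧ w ≠ v ∧ barLeft n w ≤ edgeX n u v ∧
      edgeX n u v ≤ barRight n w ∧ min (height n u) (height n v) < height n w ∧
        height n w < max (height n u) (height n v) := by
  rw [drawing, ofInt_crossesBar_iff, Set.mem_Icc, Set.mem_Ioo, and_assoc]

theorem height_eq_of_crossesBar_inl_inl {a b : Fin (2 * n)}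
    (hab : (evenPDW n).Adj (.inl a) (.inl b)) {w : Fin (2 * n) ⊕ Bool}
    (h : (drawing n).CrossesBar (.inl a) (.inl b) w) : height n w = min a.val b.val + 1 := by
  obtain ⟨hwa, hwb, hl, hr, hlo, hhi⟩ := crossesBar_iff.1 h
  have hab := adj_inl_inl_cases n hab
  rcases w with c | _ | _ <;> simp only [height, edgeX, cycleEdgeX, barLeft, barRight] at * <;>
    (try split_ifs at hl hr) <;> omega

theorem height_eq_zero_of_crossesBar_inl_inr_false {a : Fin (2 * n)} {w : Fin (2 * n) ⊕ Bool}
    (h : (drawing n).CrossesBar (.inl a) (.inr false) w) : height n w = 0 := by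
  obtain ⟨hwa, hwx, hl, hr, hlo, hhi⟩ := crossesBar_iff.1 h
  rcases w with c | _ | _ <;> simp only [height, edgeX, barLeft, barRight] at * <;>
    (try split_ifs at hl hr) <;> omega

theorem height_eq_of_crossesBar_inl_inr_true {a : Fin (2 * n)} {w : Fin (2 * n) ⊕ Bool}
    (h : (drawing n).CrossesBar (.inl a) (.inr true) w) : height n w = 2 * n - 1 := by
  obtain ⟨hwa, hwy, hl, hr, hlo, hhi⟩ := crossesBar_iff.1 h
  rcases w with c | _ | _ <;> simp only [height, edgeX, barLeft, barRight] at * <;>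
    (try split_ifs at hl hr) <;> omega

theorem not_crossesBar_inr_inr {b b' : Bool} {w : Fin (2 * n) ⊕ Bool} :
    ¬(drawing n).CrossesBar (.inr b) (.inr b') w := by
  intro h
  obtain ⟨hwb, hwb', hl, hr, hlo, hhi⟩ := crossesBar_iff.1 h
  rcases w with c | _ | _ <;> cases b <;> cases b' <;>
    simp only [height, edgeX, barLeft, barRight] at * <;> (try split_ifs at hl hr) <;> omega

theorem exists_height_eq_of_crossesBar {u v : Fin (2 * n) ⊕ Bool} (huv : (evenPDW n).Adj u v) :
    ∃ t, ∀ w, (drawing n).CrossesBar u v w → height n w = t := by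
  rcases u with a | _ | _ <;> rcases v with b | _ | _
  case inl.inl => exact ⟨_, fun _ => height_eq_of_crossesBar_inl_inl huv⟩
  case inl.inr.false => exact ⟨0, fun _ => height_eq_zero_of_crossesBar_inl_inr_false⟩
  case inr.false.inl =>
    exact ⟨0, fun _ h => height_eq_zero_of_crossesBar_inl_inr_false (crossesBar_comm _ |>.1 h)⟩
  case inl.inr.true => exact ⟨_, fun _ => height_eq_of_crossesBar_inl_inr_true⟩
  case inr.true.inl =>
    exact ⟨_, fun _ h => height_eq_of_crossesBar_inl_inr_true (crossesBar_comm _ |>.1 h)⟩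
  all_goals exact ⟨0, fun _ h => (not_crossesBar_inr_inr h).elim⟩

end EvenPDW

theorem evenPDW_isBar1Visible_general (n : ℕ) :
    IsBar1Visible (evenPDW n) := by
  refine (EvenPDW.drawing n).isBar1Visible fun u v huv => ?_
  obtain ⟨t, ht⟩ := EvenPDW.exists_height_eq_of_crossesBar huv
  exact ⟨t, fun w hw => congrArg (Int.cast : ℤ → ℝ) (ht w hw)⟩

/-- Every even pseudo double wheel 1-planar graph is a bar
1-visible graph. -/
theorem evenPDW_isBar1Visible (n : ℕ) (hn : 3 ≤ n) :
    IsBar1Visible (evenPDW n) :=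
  evenPDW_isBar1Visible_general n
end

section
/- In the directed planar st-graph G_{st} built from the p×q grid with right diagonals, the longest directed path in the dual graph G*_{st} has length at most 2(p+q). -/
/-- The faces of the planar st-graph `G_st` built from the `p × q` grid with
right diagonals (source `s` below, sink `t` above). Cell `(i, j)` (rows
`i, i+1`, columns `j, j+1`, 0-based) is split by its right diagonal into a
left triangular face `L i j` and a right triangular face `R i j`; `B j` and
`T j` are the faces between consecutive `s`-edges resp. `t`-edges; `sstar` and
`tstar` are the left and right outer faces. -/
inductive GstFace (p q : ℕ) : Type
  | L (i j : ℕ) | R (i j : ℕ) | B (j : ℕ) | T (j : ℕ) | sstar | tstar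

/-- The edges of the dual digraph `G*_st`: for every edge `e` of `G_st` there
is a dual edge from the face to the left of `e` to the face to the right of
`e`. -/
def gstDualEdge (p q : ℕ) : GstFace p q → GstFace p q → Prop := fun f g =>
  -- dual of the right-diagonal edge of cell (i, j)
  (∃ i j, i + 1 < p ∧ j + 1 < q ∧ f = .L i j ∧ g = .R i j) ∨
  -- dual of a horizontal edge, interior rows
  (∃ i j, 1 ≤ i ∧ i + 1 < p ∧ j + 1 < q ∧ f = .R i j ∧ g = .L (i - 1) j) ∨
  -- dual of a horizontal edge of the first row
  (∃ j, 2 ≤ p ∧ j + 1 < q ∧ f = .R 0 j ∧ g = .B j) ∨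
  -- dual of a horizontal edge of the last row
  (∃ j, 2 ≤ p ∧ j + 1 < q ∧ f = .T j ∧ g = .L (p - 2) j) ∨
  -- dual of a horizontal edge when p = 1
  (∃ j, p = 1 ∧ j + 1 < q ∧ f = .T j ∧ g = .B j) ∨
  -- dual of a vertical edge in the first column
  (∃ i, i + 1 < p ∧ 2 ≤ q ∧ f = .sstar ∧ g = .L i 0) ∨
  -- dual of a vertical edge in the last column
  (∃ i, i + 1 < p ∧ 2 ≤ q ∧ f = .R i (q - 2) ∧ g = .tstar) ∨
  -- dual of an interior vertical edge
  (∃ i j, i + 1 < p ∧ 1 ≤ j ∧ j + 1 < q ∧ f = .R i (j - 1) ∧ g = .L i j) ∨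
  -- dual of a vertical, s- or t-edge when q = 1
  (q = 1 ∧ f = .sstar ∧ g = .tstar) ∨
  -- duals of the s-edges
  (2 ≤ q ∧ f = .sstar ∧ g = .B 0) ∨
  (∃ j, j + 2 < q ∧ f = .B j ∧ g = .B (j + 1)) ∨
  (2 ≤ q ∧ f = .B (q - 2) ∧ g = .tstar) ∨
  -- duals of the t-edges
  (2 ≤ q ∧ f = .sstar ∧ g = .T 0) ∨
  (∃ j, j + 2 < q ∧ f = .T j ∧ g = .T (j + 1)) ∨
  (2 ≤ q ∧ f = .T (q - 2) ∧ g = .tstar)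

theorem chain_length_le_of_potential {α : Type*} (r : α → α → Prop) (φ : α → ℕ) (N : ℕ)
    (hφ : ∀ a b, r a b → φ a < φ b ∧ φ b ≤ N) (f : ℕ → α) (m : ℕ)
    (hchain : ∀ k, k < m → r (f k) (f (k + 1))) : m ≤ N := by
  have hrise : ∀ k, k ≤ m → k ≤ φ (f k) := by
    intro k hk
    induction k with
    | zero => exact Nat.zero_le _
    | succ k ih => exact (ih (by omega)).trans_lt (hφ _ _ (hchain k hk)).1
  cases m with
  | zero => exact Nat.zero_le N
  | succ n => exact (hrise (n + 1) le_rfl).trans (hφ _ _ (hchain n n.lt_succ_self)).2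

/-- A numbering of the faces increasing along every dual edge: the faces of cell `(i, j)` sit on
anti-diagonal `p - 1 - i + j` of the grid, the left one before the right one. -/
def gstFaceRank (p q : ℕ) : GstFace p q → ℕ
  | .L i j => 2 * (p - 1 - i) + 2 * j
  | .R i j => 2 * (p - 1 - i) + 2 * j + 1
  | .B j => 2 * p + 2 * j + 1
  | .T j => 2 * j + 1
  | .sstar => 0
  | .tstar => 2 * (p + q)

theorem gstFaceRank_lt_and_le_of_gstDualEdge {p q : ℕ} {f g : GstFace p q}
    (h : gstDualEdge p q f g) :
    gstFaceRank p q f < gstFaceRank p q g ∧ gstFaceRank p q g ≤ 2 * (p + q) := by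
  rcases h with ⟨i, j, _, _, rfl, rfl⟩ | ⟨i, j, _, _, _, rfl, rfl⟩ | ⟨j, _, _, rfl, rfl⟩ |
    ⟨j, _, _, rfl, rfl⟩ | ⟨j, _, _, rfl, rfl⟩ | ⟨i, _, _, rfl, rfl⟩ | ⟨i, _, _, rfl, rfl⟩ |
    ⟨i, j, _, _, _, rfl, rfl⟩ | ⟨_, rfl, rfl⟩ | ⟨_, rfl, rfl⟩ | ⟨j, _, rfl, rfl⟩ | ⟨_, rfl, rfl⟩ |
    ⟨_, rfl, rfl⟩ | ⟨j, _, rfl, rfl⟩ | ⟨_, rfl, rfl⟩ <;>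
  simp only [gstFaceRank] <;> omega

/-- In the dual `G*_st` of the planar st-graph built from the
`p × q` grid with right diagonals, every directed path has length at most
`2(p + q)`. -/
theorem gstDual_longest_path_le (p q m : ℕ) (f : ℕ → GstFace p q)
    (hpath : ∀ k, k < m → gstDualEdge p q (f k) (f (k + 1))) :
    m ≤ 2 * (p + q) :=
  chain_length_le_of_potential (gstDualEdge p q) (gstFaceRank p q) _
    (fun _ _ h => gstFaceRank_lt_and_le_of_gstDualEdge h) f m hpath
end
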